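/- For every integer n ≥ 3, the prism graph C_n × P_2 is a super totally antimagic total graph, i.e. there exists a bijection f : V ∪ E → {1,...,5n} with f(V)={1,...,2n} such that all edge-weights are pairwise distinct and all vertex-weights are pairwise distinct. -/

import Mathlib

/-!
Let `g` be the permutation `1, 3, 5, …, 6, 4, 2` of `{1, …, n}` (odd numbers up, then even
numbers down; `Prism.zigzag`). Label `u_i` by `n + 1 - g i`, `v_i` by `n + g i`, `u_i u_{i+1}` by
`2n + g i`, the spoke `u_i v_i` by `3n + g i` and `v_i v_{i+1}` by `4n + g (n - 1 - i)`: each of the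
five classes gets a block of `n` consecutive labels, vertices first. The edge weights are then
`4n + 2 - g (i + 1)`, `5n + 1 + g i` and `6n + g i + g (i + 1) + g (n - 1 - i)` on the three edge
classes, and the vertex weights `8n + 1 + g (i - 1) + g i` at `u_i` and
`12n + 2 g i + g (n - i) + g (n - 1 - i)` at `v_i` (indices mod `n`). The classes occupy disjoint
ranges, and inside each class these expressions are injective in `i`, by a case analysis on the
two branches of `g`.
-/

open Sum

/-- The weight of an edge `e` under a total labeling `f` of the graph `G`:
the label of `e` plus the labels of its two endpoints. -/
noncomputable def edgeWt {V : Type*} (G : SimpleGraph V) (f : V ⊕ G.edgeSet → ℕ)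
    (e : G.edgeSet) : ℕ :=
  f (inr e) + ∑ᶠ (v : V) (_ : v ∈ (e : Sym2 V)), f (inl v)

/-- The weight of a vertex `v` under a total labeling `f` of the graph `G`:
the label of `v` plus the labels of all edges incident with `v`. -/
noncomputable def vertexWt {V : Type*} (G : SimpleGraph V) (f : V ⊕ G.edgeSet → ℕ)
    (v : V) : ℕ :=
  f (inl v) + ∑ᶠ (e : G.edgeSet) (_ : v ∈ (e : Sym2 V)), f (inr e)

/-- The prism `C_n × P_2`, with vertices `u_i = inl i` and `v_i = inr i`
(`i` running over `Fin n`), cycle edges `u_i u_{i+1}`, `v_i v_{i+1}` (indices mod `n`)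
and spokes `u_i v_i`. -/
def prism (n : ℕ) : SimpleGraph (Fin n ⊕ Fin n) :=
  SimpleGraph.fromRel (fun a b =>
    (∃ p q : Fin n, ((p : ℕ) + 1) % n = (q : ℕ) ∧ a = inl p ∧ b = inl q) ∨
    (∃ p q : Fin n, ((p : ℕ) + 1) % n = (q : ℕ) ∧ a = inr p ∧ b = inr q) ∨
    (∃ p : Fin n, a = inl p ∧ b = inr p))

open Set Function

theorem edgeWt_eq_of_coe_eq {V : Type*} (G : SimpleGraph V) (f : V ⊕ G.edgeSet → ℕ)
    {e : G.edgeSet} {x y : V} (he : (e : Sym2 V) = s(x, y)) :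
    edgeWt G f e = f (inr e) + (f (inl x) + f (inl y)) := by
  have hxy : x ≠ y := G.ne_of_adj (G.mem_edgeSet.1 (he ▸ e.2))
  rw [edgeWt, he, ← finsum_mem_pair (f := fun v => f (inl v)) hxy]
  congr! 3
  simp [Sym2.mem_iff]

theorem vertexWt_eq_sum_of_equiv {V ι : Type*} (G : SimpleGraph V) (φ : ι ≃ G.edgeSet)
    (f : V ⊕ G.edgeSet → ℕ) (v : V) (s : Finset ι) (hs : ∀ k, v ∈ (φ k : Sym2 V) ↔ k ∈ s) :
    vertexWt G f v = f (inl v) + ∑ k ∈ s, f (inr (φ k)) := by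
  rw [vertexWt, ← finsum_comp_equiv φ, ← finsum_mem_coe_finset]
  simp only [hs, Finset.mem_coe]

theorem Set.BijOn.sumElim_Icc {α β : Type*} {f : α → ℕ} {g : β → ℕ} {a b c : ℕ}
    (hf : BijOn f univ (Icc (a + 1) b)) (hg : BijOn g univ (Icc (b + 1) c)) (hab : a ≤ b)
    (hbc : b ≤ c) : BijOn (Sum.elim f g) univ (Icc (a + 1) c) := by
  have hf' := fun x => mem_Icc.1 (hf.mapsTo (mem_univ x))
  have hg' := fun y => mem_Icc.1 (hg.mapsTo (mem_univ y))
  refine ⟨?_, ?_, fun m hm => ?_⟩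
  · rintro (x | y) - <;> simp only [Sum.elim_inl, Sum.elim_inr, mem_Icc]
    · have := hf' x; omega
    · have := hg' y; omega
  · refine (Injective.sumElim (injOn_univ.1 hf.injOn) (injOn_univ.1 hg.injOn)
      fun x y hxy => ?_).injOn
    have := hf' x; have := hg' y; omega
  · rcases le_or_gt m b with hmb | hmb
    · obtain ⟨x, -, hx⟩ := hf.surjOn ⟨hm.1, hmb⟩
      exact ⟨inl x, mem_univ _, hx⟩
    · obtain ⟨y, -, hy⟩ := hg.surjOn ⟨hmb, hm.2⟩
      exact ⟨inr y, mem_univ _, hy⟩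

theorem Set.BijOn.const_add_Icc {α : Type*} {g : α → ℕ} {s : Set α} {n : ℕ} (c : ℕ) {d : ℕ}
    (hg : BijOn g s (Icc 1 n)) (h : c + n = d) : BijOn (fun x => c + g x) s (Icc (c + 1) d) := by
  have hadd := (add_right_injective c).injOn.bijOn_image (s := Icc 1 n)
  rw [image_const_add_Icc, h] at hadd
  exact hadd.comp hg

theorem Set.BijOn.const_sub_Icc {α : Type*} {g : α → ℕ} {s : Set α} {n : ℕ}
    (hg : BijOn g s (Icc 1 n)) : BijOn (fun x => n + 1 - g x) s (Icc 1 n) := by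
  have hsub : BijOn (fun m => n + 1 - m) (Icc 1 n) (Icc 1 n) := by
    refine ⟨fun m hm => ?_, fun m hm k hk hmk => ?_, fun m hm => ⟨n + 1 - m, ?_, ?_⟩⟩ <;>
      simp only [mem_Icc] at * <;> omega
  exact hsub.comp hg

namespace Fin

variable {n : ℕ} [NeZero n]

theorem val_add_one_cases (i : Fin n) :
    (↑i + 1 < n ∧ ((i + 1 : Fin n) : ℕ) = i + 1) ∨ (↑i + 1 = n ∧ ((i + 1 : Fin n) : ℕ) = 0) := by
  rw [val_add, val_one', Nat.add_mod_mod]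
  rcases Nat.lt_or_ge (↑i + 1) n with h | h
  · exact Or.inl ⟨h, Nat.mod_eq_of_lt h⟩
  · have h' : ↑i + 1 = n := le_antisymm i.isLt h
    exact Or.inr ⟨h', by rw [h', Nat.mod_self]⟩

theorem val_sub_one_cases (i : Fin n) :
    (↑(i - 1) + 1 < n ∧ (i : ℕ) = ↑(i - 1) + 1) ∨ (↑(i - 1) + 1 = n ∧ (i : ℕ) = 0) := by
  have := val_add_one_cases (i - 1)
  rwa [sub_add_cancel] at this

theorem add_one_mod_eq_val_iff (p q : Fin n) : ((p : ℕ) + 1) % n = q ↔ q = p + 1 := by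
  rw [Fin.ext_iff, val_add, val_one', Nat.add_mod_mod, eq_comm]

theorem add_one_add_one_ne_self (hn : 3 ≤ n) (i : Fin n) : i + 1 + 1 ≠ i := by
  intro h
  have := val_add_one_cases i
  have := val_add_one_cases (i + 1)
  rw [h] at this
  omega

theorem sub_one_ne_self (hn : 2 ≤ n) (i : Fin n) : i - 1 ≠ i := by
  simp only [ne_eq, sub_eq_self, one_eq_zero_iff]
  omega

end Fin

namespace Prism

def zigzag (n i : ℕ) : ℕ := if 2 * i < n then 2 * i + 1 else 2 * (n - i)

theorem zigzag_cases (n i : ℕ) :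
    (2 * i < n ∧ zigzag n i = 2 * i + 1) ∨ (n ≤ 2 * i ∧ zigzag n i = 2 * (n - i)) := by
  unfold zigzag; split_ifs <;> omega

theorem bijOn_zigzag (n : ℕ) : BijOn (fun i : Fin n => zigzag n i) univ (Icc 1 n) := by
  refine ⟨fun i _ => ?_, fun i _ j _ hij => Fin.ext ?_, fun m hm => ?_⟩
  · have := zigzag_cases n i; have := i.isLt; simp only [mem_Icc]; omega
  · have := zigzag_cases n i; have := zigzag_cases n j; dsimp only at hij; omega
  · obtain ⟨hm₁, hm₂⟩ := hm
    set i := if m % 2 = 1 then m / 2 else n - m / 2 with hi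
    have := zigzag_cases n i
    refine ⟨⟨i, by split_ifs at hi <;> omega⟩, mem_univ _, ?_⟩
    dsimp only; split_ifs at hi <;> omega

theorem zigzag_mem_Icc {n : ℕ} (i : Fin n) : zigzag n i ∈ Icc 1 n :=
  (bijOn_zigzag n).mapsTo (mem_univ i)

theorem injective_zigzag (n : ℕ) : Injective fun i : Fin n => zigzag n i :=
  injOn_univ.1 (bijOn_zigzag n).injOn

def vertexLabel (n : ℕ) : Fin n ⊕ Fin n → ℕ :=
  Sum.elim (fun i => n + 1 - zigzag n i) (fun i => n + zigzag n i)

def edgeLabel (n : ℕ) : Fin n ⊕ Fin n ⊕ Fin n → ℕ :=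
  Sum.elim (fun i => 2 * n + zigzag n i)
    (Sum.elim (fun i => 3 * n + zigzag n i) (fun i => 4 * n + zigzag n i.rev))

theorem bijOn_vertexLabel (n : ℕ) : BijOn (vertexLabel n) univ (Icc 1 (2 * n)) :=
  (bijOn_zigzag n).const_sub_Icc.sumElim_Icc ((bijOn_zigzag n).const_add_Icc n (two_mul n).symm)
    n.zero_le (by omega)

theorem bijOn_edgeLabel (n : ℕ) : BijOn (edgeLabel n) univ (Icc (2 * n + 1) (5 * n)) :=
  ((bijOn_zigzag n).const_add_Icc (2 * n) (by ring)).sumElim_Icc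
    (((bijOn_zigzag n).const_add_Icc (3 * n) (by ring)).sumElim_Icc
      (((bijOn_zigzag n).comp Fin.rev_bijective.bijOn_univ).const_add_Icc (4 * n) (by ring))
      (by omega) (by omega))
    (by omega) (by omega)

variable {n : ℕ} [NeZero n]

theorem injective_zigzag_sub_one_add (hn : 3 ≤ n) :
    Injective fun i : Fin n => zigzag n ↑(i - 1) + zigzag n i := by
  intro i j hij
  dsimp only at hij
  have := Fin.val_sub_one_cases i; have := Fin.val_sub_one_cases j
  have := zigzag_cases n i; have := zigzag_cases n j
  have := zigzag_cases n ↑(i - 1); have := zigzag_cases n ↑(j - 1)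
  exact Fin.ext (by omega)

theorem injective_zigzag_add_zigzag_add_one_add_rev :
    Injective fun i : Fin n => zigzag n i + zigzag n ↑(i + 1) + zigzag n i.rev := by
  intro i j hij
  dsimp only at hij
  have := Fin.val_rev i; have := Fin.val_rev j
  have := zigzag_cases n i; have := zigzag_cases n j
  have := zigzag_cases n ↑(i + 1); have := zigzag_cases n ↑(j + 1)
  have := zigzag_cases n i.rev; have := zigzag_cases n j.rev
  rcases Fin.val_add_one_cases i with hi | hi <;> rcases Fin.val_add_one_cases j with hj | hj <;>
    exact Fin.ext (by omega)

theorem injective_two_mul_zigzag_add_rev :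
    Injective fun i : Fin n => 2 * zigzag n i + zigzag n (i - 1).rev + zigzag n i.rev := by
  intro i j hij
  dsimp only at hij
  have := Fin.val_rev i; have := Fin.val_rev j
  have := Fin.val_rev (i - 1); have := Fin.val_rev (j - 1)
  have := zigzag_cases n i; have := zigzag_cases n j
  have := zigzag_cases n (i - 1).rev; have := zigzag_cases n (j - 1).rev
  have := zigzag_cases n i.rev; have := zigzag_cases n j.rev
  rcases Fin.val_sub_one_cases i with hi | hi <;> rcases Fin.val_sub_one_cases j with hj | hj <;>
    exact Fin.ext (by omega)

def edge : Fin n ⊕ Fin n ⊕ Fin n → Sym2 (Fin n ⊕ Fin n)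
  | inl i => s(inl i, inl (i + 1))
  | inr (inl i) => s(inl i, inr i)
  | inr (inr i) => s(inr i, inr (i + 1))

theorem edge_mem_edgeSet (hn : 2 ≤ n) (k : Fin n ⊕ Fin n ⊕ Fin n) :
    edge k ∈ (prism n).edgeSet := by
  have hsucc (i : Fin n) : ((i : ℕ) + 1) % n = ↑(i + 1) := (Fin.add_one_mod_eq_val_iff _ _).2 rfl
  have hne (i : Fin n) : i ≠ i + 1 := by simpa using (by omega : n ≠ 1)
  rcases k with i | i | i <;>
    simp only [edge, SimpleGraph.mem_edgeSet, prism, SimpleGraph.fromRel_adj]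
  · exact ⟨by simpa using hne i, .inl (.inl ⟨i, i + 1, hsucc i, rfl, rfl⟩)⟩
  · exact ⟨by simp, .inl (.inr (.inr ⟨i, rfl, rfl⟩))⟩
  · exact ⟨by simpa using hne i, .inl (.inr (.inl ⟨i, i + 1, hsucc i, rfl, rfl⟩))⟩

theorem exists_edge_eq {e : Sym2 (Fin n ⊕ Fin n)} (he : e ∈ (prism n).edgeSet) :
    ∃ k, edge k = e := by
  induction e using Sym2.ind with
  | _ x y =>
    rw [SimpleGraph.mem_edgeSet, prism, SimpleGraph.fromRel_adj] at he
    obtain ⟨-, hxy⟩ := he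
    simp only [Fin.add_one_mod_eq_val_iff] at hxy
    rcases hxy with (⟨p, q, rfl, rfl, rfl⟩ | ⟨p, q, rfl, rfl, rfl⟩ | ⟨p, rfl, rfl⟩) |
      (⟨p, q, rfl, rfl, rfl⟩ | ⟨p, q, rfl, rfl, rfl⟩ | ⟨p, rfl, rfl⟩)
    · exact ⟨inl p, rfl⟩
    · exact ⟨inr (inr p), rfl⟩
    · exact ⟨inr (inl p), rfl⟩
    · exact ⟨inl p, Sym2.eq_swap⟩
    · exact ⟨inr (inr p), Sym2.eq_swap⟩
    · exact ⟨inr (inl p), Sym2.eq_swap⟩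

theorem edge_injective (hn : 3 ≤ n) : Injective (edge (n := n)) := by
  rintro (i | i | i) (j | j | j) h <;>
    simp only [edge, Sym2.eq_iff, inl.injEq, inr.injEq, reduceCtorEq, add_left_inj, and_self,
      and_false, false_and, or_self, or_false] at h ⊢
  all_goals first
    | exact h
    | exact h.resolve_right fun ⟨hij, hji⟩ => Fin.add_one_add_one_ne_self hn j (hij ▸ hji)

noncomputable def edgeEquiv (hn : 3 ≤ n) : (Fin n ⊕ Fin n ⊕ Fin n) ≃ (prism n).edgeSet :=
  Equiv.ofBijective (fun k => ⟨edge k, edge_mem_edgeSet (by omega) k⟩)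
    ⟨fun k l h => edge_injective hn (congrArg Subtype.val h),
      fun e => (exists_edge_eq e.2).imp fun _ hk => Subtype.ext hk⟩

@[simp]
theorem coe_edgeEquiv (hn : 3 ≤ n) (k : Fin n ⊕ Fin n ⊕ Fin n) :
    (edgeEquiv hn k : Sym2 (Fin n ⊕ Fin n)) = edge k :=
  rfl

theorem inl_mem_edge (i : Fin n) (k : Fin n ⊕ Fin n ⊕ Fin n) :
    inl i ∈ edge k ↔ k = inl (i - 1) ∨ k = inl i ∨ k = inr (inl i) := by
  rcases k with j | j | j <;> simp [edge, eq_sub_iff_add_eq, eq_comm, or_comm]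

theorem inr_mem_edge (i : Fin n) (k : Fin n ⊕ Fin n ⊕ Fin n) :
    inr i ∈ edge k ↔ k = inr (inr (i - 1)) ∨ k = inr (inr i) ∨ k = inr (inl i) := by
  rcases k with j | j | j <;> simp [edge, eq_sub_iff_add_eq, eq_comm, or_comm]

noncomputable def labeling (hn : 3 ≤ n) : (Fin n ⊕ Fin n) ⊕ (prism n).edgeSet → ℕ :=
  Sum.elim (vertexLabel n) (edgeLabel n ∘ (edgeEquiv hn).symm)

theorem bijOn_labeling (hn : 3 ≤ n) : BijOn (labeling hn) univ (Icc 1 (5 * n)) :=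
  (bijOn_vertexLabel n).sumElim_Icc
    ((bijOn_edgeLabel n).comp (edgeEquiv hn).symm.bijective.bijOn_univ) (Nat.zero_le _) (by omega)

@[simp]
theorem labeling_inl (hn : 3 ≤ n) (v : Fin n ⊕ Fin n) : labeling hn (inl v) = vertexLabel n v :=
  rfl

@[simp]
theorem labeling_inr_edgeEquiv (hn : 3 ≤ n) (k : Fin n ⊕ Fin n ⊕ Fin n) :
    labeling hn (inr (edgeEquiv hn k)) = edgeLabel n k := by
  simp [labeling]

theorem edgeWt_labeling_comp (hn : 3 ≤ n) :
    edgeWt (prism n) (labeling hn) ∘ edgeEquiv hn =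
      Sum.elim (fun i : Fin n => 4 * n + 2 - zigzag n ↑(i + 1))
        (Sum.elim (fun i : Fin n => 5 * n + 1 + zigzag n i)
          (fun i : Fin n => 6 * n + (zigzag n i + zigzag n ↑(i + 1) + zigzag n i.rev))) := by
  funext k
  have hg := fun i : Fin n => mem_Icc.1 (zigzag_mem_Icc i)
  rcases k with i | i | i
  · have := hg i; have := hg (i + 1)
    rw [comp_apply, edgeWt_eq_of_coe_eq _ _ (e := edgeEquiv hn (inl i)) rfl]
    simp only [labeling_inl, labeling_inr_edgeEquiv, vertexLabel, edgeLabel, elim_inl]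
    omega
  · have := hg i
    rw [comp_apply, edgeWt_eq_of_coe_eq _ _ (e := edgeEquiv hn (inr (inl i))) rfl]
    simp only [labeling_inl, labeling_inr_edgeEquiv, vertexLabel, edgeLabel, elim_inl, elim_inr]
    omega
  · rw [comp_apply, edgeWt_eq_of_coe_eq _ _ (e := edgeEquiv hn (inr (inr i))) rfl]
    simp only [labeling_inl, labeling_inr_edgeEquiv, vertexLabel, edgeLabel, elim_inr]
    omega

theorem vertexWt_labeling_inl (hn : 3 ≤ n) (i : Fin n) :
    vertexWt (prism n) (labeling hn) (inl i) = 8 * n + 1 + (zigzag n ↑(i - 1) + zigzag n i) := by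
  have hne := Fin.sub_one_ne_self (by omega) i
  rw [vertexWt_eq_sum_of_equiv (prism n) (edgeEquiv hn) _ _ {inl (i - 1), inl i, inr (inl i)}
    fun k => by simpa using inl_mem_edge i k,
    Finset.sum_insert (by simp [hne]), Finset.sum_pair (by simp)]
  have := mem_Icc.1 (zigzag_mem_Icc i)
  simp only [labeling_inl, labeling_inr_edgeEquiv, vertexLabel, edgeLabel, elim_inl, elim_inr]
  omega

theorem vertexWt_labeling_inr (hn : 3 ≤ n) (i : Fin n) :
    vertexWt (prism n) (labeling hn) (inr i) =
      12 * n + (2 * zigzag n i + zigzag n (i - 1).rev + zigzag n i.rev) := by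
  have hne := Fin.sub_one_ne_self (by omega) i
  rw [vertexWt_eq_sum_of_equiv (prism n) (edgeEquiv hn) _ _
    {inr (inr (i - 1)), inr (inr i), inr (inl i)} fun k => by simpa using inr_mem_edge i k,
    Finset.sum_insert (by simp [hne]), Finset.sum_pair (by simp)]
  simp only [labeling_inl, labeling_inr_edgeEquiv, vertexLabel, edgeLabel, elim_inl, elim_inr]
  omega

theorem injective_edgeWt_labeling (hn : 3 ≤ n) : Injective (edgeWt (prism n) (labeling hn)) := by
  rw [← (edgeEquiv hn).injective_comp, edgeWt_labeling_comp]
  have hg := fun i : Fin n => mem_Icc.1 (zigzag_mem_Icc i)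
  refine Injective.sumElim (fun i j hij => ?_)
    (Injective.sumElim (fun i j hij => injective_zigzag n (Nat.add_left_cancel hij))
      (fun i j hij => injective_zigzag_add_zigzag_add_one_add_rev (Nat.add_left_cancel hij))
      fun i j => ?_) fun i => ?_
  · have := hg (i + 1); have := hg (j + 1)
    exact add_right_cancel <|
      injective_zigzag n (show zigzag n ↑(i + 1) = zigzag n ↑(j + 1) by omega)
  · have := hg i; have := hg (j + 1); have := hg j; have := hg j.rev
    omega
  · rintro (j | j) <;> have := hg (i + 1) <;> have := hg j <;>
      simp only [Sum.elim_inl, Sum.elim_inr] <;> omega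

theorem injective_vertexWt_labeling (hn : 3 ≤ n) :
    Injective (vertexWt (prism n) (labeling hn)) := by
  have hg := fun i : Fin n => mem_Icc.1 (zigzag_mem_Icc i)
  have hwt : vertexWt (prism n) (labeling hn) =
      Sum.elim (fun i : Fin n => 8 * n + 1 + (zigzag n ↑(i - 1) + zigzag n i))
        (fun i : Fin n => 12 * n + (2 * zigzag n i + zigzag n (i - 1).rev + zigzag n i.rev)) := by
    funext v
    rcases v with i | i
    · exact vertexWt_labeling_inl hn i
    · exact vertexWt_labeling_inr hn i
  rw [hwt]
  refine Injective.sumElim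
    (fun i j hij => injective_zigzag_sub_one_add hn (Nat.add_left_cancel hij))
    (fun i j hij => injective_two_mul_zigzag_add_rev (Nat.add_left_cancel hij)) fun i j => ?_
  have := hg i; have := hg (i - 1); have := hg j
  omega

end Prism

theorem prism_super_TAT (n : ℕ) (hn : 3 ≤ n) :
    ∃ f : (Fin n ⊕ Fin n) ⊕ (prism n).edgeSet → ℕ,
      Set.BijOn f Set.univ (Set.Icc 1 (5 * n)) ∧
      Set.BijOn (fun v => f (inl v)) Set.univ (Set.Icc 1 (2 * n)) ∧
      Function.Injective (edgeWt (prism n) f) ∧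
      Function.Injective (vertexWt (prism n) f) := by
  have : NeZero n := ⟨by omega⟩
  exact ⟨Prism.labeling hn, Prism.bijOn_labeling hn, Prism.bijOn_vertexLabel n,
    Prism.injective_edgeWt_labeling hn, Prism.injective_vertexWt_labeling hn⟩
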